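/- With notation as in Tweedie's formula — p(x) = ∫ N(x; μ(z), γ²I) q(z) dz, D(x) = posterior mean of μ(z), f convex differentiable, g(x) = −log p(x), T(x) = prox_{γ²f}(D(x)) — a point x* is a fixed point of T if and only if ∇f(x*) + ∇g(x*) = 0, i.e., x* is a critical point of f + g. -/

import Mathlib

/-!
For convex `f`, the prox objective `u ↦ c f(u) + ½‖v - u‖²` is `1`-strongly convex, so its
minimizer `prox_{cf}(v)` is its unique critical point: `prox_{cf}(v) = x` iff
`v - x = c ∇f(x)`. Taking `v = D(x*)` and `c = γ²`, Tweedie's formula rewrites `v - x*` as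
`-γ² ∇g(x*)`, so `T x* = x*` iff `γ² (∇f + ∇g)(x*) = 0`.
-/

open Real MeasureTheory

/-- Isotropic Gaussian density on `ℝⁿ` with mean `m` and covariance `γ²I`. -/
noncomputable def gaussDens (n : ℕ) (γ : ℝ) (x m : EuclideanSpace ℝ (Fin n)) : ℝ :=
  (2 * π * γ ^ 2) ^ (-(n : ℝ) / 2) * Real.exp (-‖x - m‖ ^ 2 / (2 * γ ^ 2))

open Set InnerProductSpace

section Prox

variable {F : Type*} [NormedAddCommGroup F] [InnerProductSpace ℝ F] [CompleteSpace F]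

theorem ConvexOn.add_inner_le_of_hasGradientAt {f : F → ℝ} {f' x : F}
    (hf : ConvexOn ℝ univ f) (hx : HasGradientAt f f' x) (y : F) :
    f x + ⟪f', y - x⟫_ℝ ≤ f y := by
  let ℓ : ℝ →ᵃ[ℝ] F := AffineMap.lineMap x y
  have hline : HasDerivAt (f ∘ ℓ) ⟪f', y - x⟫_ℝ 0 := by
    have hfℓ : HasFDerivAt f (toDual ℝ F f') (ℓ 0) := by
      simpa [ℓ] using hx.hasFDerivAt
    simpa using hfℓ.comp_hasDerivAt (0 : ℝ) AffineMap.hasDerivAt_lineMap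
  have hslope := (hf.comp_affineMap ℓ).le_slope_of_hasDerivAt
    (mem_univ 0) (mem_univ 1) zero_lt_one hline
  simp only [slope_def_field, Function.comp_apply, AffineMap.lineMap_apply_one,
    AffineMap.lineMap_apply_zero, sub_zero, div_one, ℓ] at hslope
  linarith

noncomputable def proxObjective (c : ℝ) (f : F → ℝ) (v u : F) : ℝ :=
  c * f u + 1 / 2 * ‖v - u‖ ^ 2

theorem hasGradientAt_proxObjective {c : ℝ} {f : F → ℝ} {f' x : F} (v : F)
    (hx : HasGradientAt f f' x) :
    HasGradientAt (proxObjective c f v) (c • f' + (x - v)) x := by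
  have hquad : HasFDerivAt (fun u => 1 / 2 * ‖v - u‖ ^ 2) (toDual ℝ F (x - v)) x := by
    refine (((hasFDerivAt_id x).const_sub v).norm_sq.const_mul (1 / 2 : ℝ)).congr_fderiv ?_
    ext w
    simp
  rw [hasGradientAt_iff_hasFDerivAt, map_add, map_smul]
  exact (hx.hasFDerivAt.const_mul c).add hquad

theorem proxObjective_add_le {c : ℝ} {f : F → ℝ} {f' x v : F} (hf : ConvexOn ℝ univ f)
    (hc : 0 ≤ c) (hx : HasGradientAt f f' x) (hv : v - x = c • f') (u : F) :
    proxObjective c f v x + 1 / 2 * ‖u - x‖ ^ 2 ≤ proxObjective c f v u := by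
  have hsub := mul_le_mul_of_nonneg_left (hf.add_inner_le_of_hasGradientAt hx u) hc
  rw [mul_add] at hsub
  have hexp : ‖v - u‖ ^ 2 = ‖v - x‖ ^ 2 - 2 * ⟪v - x, u - x⟫_ℝ + ‖u - x‖ ^ 2 := by
    rw [← norm_sub_sq_real, sub_sub_sub_cancel_right]
  have hinner : ⟪v - x, u - x⟫_ℝ = c * ⟪f', u - x⟫_ℝ := by
    rw [hv, real_inner_smul_left]
  unfold proxObjective
  linarith

theorem eq_iff_of_isMinOn_proxObjective {c : ℝ} {f : F → ℝ} {f' x v y : F}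
    (hf : ConvexOn ℝ univ f) (hc : 0 ≤ c) (hx : HasGradientAt f f' x)
    (hy : IsMinOn (proxObjective c f v) univ y) :
    y = x ↔ v - x = c • f' := by
  constructor
  · rintro rfl
    have hcrit := (hy.isLocalMin Filter.univ_mem).hasFDerivAt_eq_zero
      (hasGradientAt_proxObjective v hx)
    rw [map_eq_zero_iff _ (toDual ℝ F).injective] at hcrit
    rw [← sub_eq_zero, ← neg_eq_zero, ← hcrit]
    abel
  · intro hv
    have h := (proxObjective_add_le hf hc hx hv y).trans (hy (mem_univ x))
    have : ‖y - x‖ ^ 2 ≤ 0 := by linarith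
    simpa [sub_eq_zero] using this

end Prox

theorem stmt_9_general
    (n : ℕ) (γ : ℝ) (hγ : 0 < γ)
    (D : EuclideanSpace ℝ (Fin n) → EuclideanSpace ℝ (Fin n))
    (f : EuclideanSpace ℝ (Fin n) → ℝ)
    (f' g' : EuclideanSpace ℝ (Fin n) → EuclideanSpace ℝ (Fin n))
    (hconv : ConvexOn ℝ Set.univ f)
    (hfdiff : ∀ x, HasGradientAt f (f' x) x)
    -- Tweedie's formula:
    (htweedie : ∀ x, D x - x = -(γ ^ 2) • g' x)
    (P : EuclideanSpace ℝ (Fin n) → EuclideanSpace ℝ (Fin n))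
    (hP : ∀ v u : EuclideanSpace ℝ (Fin n),
      γ ^ 2 * f (P v) + (1 / 2) * ‖v - P v‖ ^ 2 ≤ γ ^ 2 * f u + (1 / 2) * ‖v - u‖ ^ 2)
    (T : EuclideanSpace ℝ (Fin n) → EuclideanSpace ℝ (Fin n))
    (hT : ∀ x, T x = P (D x))
    (xstar : EuclideanSpace ℝ (Fin n)) :
    T xstar = xstar ↔ f' xstar + g' xstar = 0 := by
  have hprox : IsMinOn (proxObjective (γ ^ 2) f (D xstar)) univ (P (D xstar)) :=
    fun u _ => hP (D xstar) u
  rw [hT, eq_iff_of_isMinOn_proxObjective hconv (sq_nonneg γ) (hfdiff xstar) hprox, htweedie,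
    neg_smul, neg_eq_iff_add_eq_zero, ← smul_add, smul_eq_zero, add_comm,
    or_iff_right (pow_pos hγ 2).ne']

/-- With `p(x) = ∫ N(x; μ(z), γ²I) q(dz)`, `D(x)` the posterior mean of `μ(z)` (satisfying
Tweedie's formula `D(x) − x = −γ²∇g(x)` for `g = −log p`), `f` convex differentiable and
`T = prox_{γ²f} ∘ D`, a point `x*` is a fixed point of `T` iff `∇f(x*) + ∇g(x*) = 0`. -/
theorem stmt_9 {Z : Type*} [MeasurableSpace Z] (q : Measure Z) [IsProbabilityMeasure q]
    (n : ℕ) (γ : ℝ) (hγ : 0 < γ) (μf : Z → EuclideanSpace ℝ (Fin n))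
    (p : EuclideanSpace ℝ (Fin n) → ℝ)
    (hp : ∀ x, p x = ∫ z, gaussDens n γ x (μf z) ∂q)
    (hppos : ∀ x, 0 < p x)
    (D : EuclideanSpace ℝ (Fin n) → EuclideanSpace ℝ (Fin n))
    (hD : ∀ x, D x = ∫ z, (gaussDens n γ x (μf z) / p x) • μf z ∂q)
    (f g : EuclideanSpace ℝ (Fin n) → ℝ)
    (hg : ∀ x, g x = -Real.log (p x))
    (f' g' : EuclideanSpace ℝ (Fin n) → EuclideanSpace ℝ (Fin n))
    (hconv : ConvexOn ℝ Set.univ f)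
    (hfdiff : ∀ x, HasGradientAt f (f' x) x)
    (hgdiff : ∀ x, HasGradientAt g (g' x) x)
    -- Tweedie's formula:
    (htweedie : ∀ x, D x - x = -(γ ^ 2) • g' x)
    (P : EuclideanSpace ℝ (Fin n) → EuclideanSpace ℝ (Fin n))
    (hP : ∀ v u : EuclideanSpace ℝ (Fin n),
      γ ^ 2 * f (P v) + (1 / 2) * ‖v - P v‖ ^ 2 ≤ γ ^ 2 * f u + (1 / 2) * ‖v - u‖ ^ 2)
    (T : EuclideanSpace ℝ (Fin n) → EuclideanSpace ℝ (Fin n))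
    (hT : ∀ x, T x = P (D x))
    (xstar : EuclideanSpace ℝ (Fin n)) :
    T xstar = xstar ↔ f' xstar + g' xstar = 0 :=
  stmt_9_general n γ hγ D f f' g' hconv hfdiff htweedie P hP T hT xstar
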